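/- arXiv:2310.04398 — 2 statements merged into one kernel-verified Lean document; each statement's English description precedes it below -/
import Mathlib

section
/- Let e1 ≥ e2 > 1 be integers with gcd(e1+1, e2−1) = 1. Then for every integer n with n ≥ max{(e1+1)(e1+e2)/e1, (e2−1)(e1+e2)/e2}, there exist nonnegative integers x, y, z satisfying e1·x − e2·y − z = 0 and x + y + z = n. -/
/-! Eliminating `z = e1 * x - e2 * y`, the system becomes `(e1 + 1) * x = n + (e2 - 1) * y`.
Since `e1 + 1` and `e2 - 1` are coprime, some `y ∈ [0, e1]` makes the right-hand side divisible
by `e1 + 1`, which fixes `x ≥ 0`; then `(e1 + 1) * z = e1 * n - (e1 + e2) * y ≥ e1 * n - (e1 + e2) * e1`,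
and the first term of the threshold is exactly what makes this nonnegative. -/

theorem Int.exists_nonneg_lt_dvd_add_mul {a b : ℤ} (n : ℤ) (ha : 0 < a) (hab : IsCoprime a b) :
    ∃ y, 0 ≤ y ∧ y < a ∧ a ∣ n + b * y := by
  obtain ⟨u, v, huv⟩ := hab
  refine ⟨-n * v % a, Int.emod_nonneg _ ha.ne', Int.emod_lt_of_pos _ ha, n * u - b * (-n * v / a), ?_⟩
  rw [Int.emod_def]
  linear_combination -n * huv

theorem stmt_6 (e1 e2 n : ℤ) (he2 : 1 < e2) (he : e2 ≤ e1)
    (hg : Int.gcd (e1 + 1) (e2 - 1) = 1)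
    (hn : max (((e1 : ℚ) + 1) * (e1 + e2) / e1) (((e2 : ℚ) - 1) * (e1 + e2) / e2) ≤ (n : ℚ)) :
    ∃ x y z : ℤ, 0 ≤ x ∧ 0 ≤ y ∧ 0 ≤ z ∧
      e1 * x - e2 * y - z = 0 ∧ x + y + z = n := by
  have he1 : 0 < e1 := by omega
  have hthreshold : (e1 + 1) * (e1 + e2) ≤ n * e1 := by
    have h := (div_le_iff₀ (by exact_mod_cast he1 : (0 : ℚ) < e1)).mp (le_of_max_le_left hn)
    exact_mod_cast h
  obtain ⟨y, hy0, hy, x, hx⟩ :=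
    Int.exists_nonneg_lt_dvd_add_mul n (by omega : 0 < e1 + 1) (Int.isCoprime_iff_gcd_eq_one.mpr hg)
  have hn0 : 0 ≤ n := by nlinarith
  have hx0 : 0 ≤ x := by nlinarith
  refine ⟨x, y, e1 * x - e2 * y, hx0, hy0, ?_, by ring, by linear_combination -hx⟩
  have hz : (e1 + 1) * (e1 * x - e2 * y) = e1 * n - (e1 + e2) * y := by linear_combination -e1 * hx
  nlinarith [mul_le_mul_of_nonneg_left (by omega : y ≤ e1) (by omega : 0 ≤ e1 + e2)]
end

section
/- Let e1 ≥ e2 > 1 be integers with d = gcd(e1+1, e2−1). For all sufficiently large multiples n of d, there exist nonnegative integers x, y, z with e1·x − e2·y − z = 0 and x + y + z = n. -/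
/-!
Put `a = e₁ + 1` and `b = e₂ - 1`. Eliminating `z` turns the system into `a x - b y = n`, and
Bézout solves this since `gcd(a, b) ∣ n`; shifting the solution we may take `0 ≤ y < a`. Then
`x ≥ 0` because `b y ≥ 0`, and `z = e₁ x - e₂ y ≥ 0` as soon as `n ≥ e₁ + e₂`, since
`a z = e₁ n - (e₁ + e₂) y` and `y ≤ e₁`.
-/

theorem Int.exists_mul_sub_mul_eq_of_gcd_dvd {a b n : ℤ} (ha : 0 < a) (hn : (Int.gcd a b : ℤ) ∣ n) :
    ∃ x y : ℤ, 0 ≤ y ∧ y < a ∧ a * x - b * y = n := by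
  obtain ⟨k, rfl⟩ := hn
  obtain ⟨y₀, hy₀⟩ : ∃ y₀, y₀ = -(Int.gcdB a b * k) := ⟨_, rfl⟩
  refine ⟨Int.gcdA a b * k - y₀ / a * b, y₀ % a, Int.emod_nonneg _ ha.ne',
    Int.emod_lt_of_pos _ ha, ?_⟩
  rw [Int.emod_def, Int.gcd_eq_gcd_ab]
  linear_combination -b * hy₀

theorem exists_nonneg_solution_of_gcd_dvd {e₁ e₂ n : ℤ} (he₁ : 0 ≤ e₁) (he₂ : 1 ≤ e₂)
    (hn : e₁ + e₂ ≤ n) (hd : (Int.gcd (e₁ + 1) (e₂ - 1) : ℤ) ∣ n) :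
    ∃ x y z : ℤ, 0 ≤ x ∧ 0 ≤ y ∧ 0 ≤ z ∧ e₁ * x - e₂ * y - z = 0 ∧ x + y + z = n := by
  obtain ⟨x, y, hy, hya, hxy⟩ :=
    Int.exists_mul_sub_mul_eq_of_gcd_dvd (by omega : (0 : ℤ) < e₁ + 1) hd
  have hx : 0 ≤ x := by nlinarith
  have hz : (e₁ + 1) * (e₁ * x - e₂ * y) = e₁ * n - (e₁ + e₂) * y := by
    linear_combination e₁ * hxy
  refine ⟨x, y, e₁ * x - e₂ * y, hx, hy, ?_, by ring, by linear_combination hxy⟩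
  nlinarith

theorem stmt_10 (e1 e2 : ℤ) (he2 : 1 < e2) (he : e2 ≤ e1) :
    ∃ N : ℤ, ∀ n : ℤ, N ≤ n → (Int.gcd (e1 + 1) (e2 - 1) : ℤ) ∣ n →
      ∃ x y z : ℤ, 0 ≤ x ∧ 0 ≤ y ∧ 0 ≤ z ∧
        e1 * x - e2 * y - z = 0 ∧ x + y + z = n :=
  ⟨e1 + e2, fun _ hn hd => exists_nonneg_solution_of_gcd_dvd (by omega) he2.le hn hd⟩
end
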